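/- arXiv:1901.07921 — 3 statements merged into one kernel-verified Lean document; each statement's English description precedes it below -/
import Mathlib

section
/- Let u: R → U be an injective ring epimorphism of commutative rings. Then Ext^1_R(U/R, U) = 0 and Hom_R(U/R, U) = 0 when U is flat as an R-module; consequently the connecting map Hom_R(U/R, U/R) → Ext^1_R(U/R, R) is an isomorphism. -/
universe u

noncomputable section

/-- The first Ext group of two `R`-modules. -/
abbrev ext1 (R : Type u) [CommRing R] (X Y : ModuleCat.{u} R) : Type u :=
  ((Ext R (ModuleCat.{u} R) 1).obj (Opposite.op X)).obj Y

/-!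
Write `K = U/R`. Since `U ⊗_R U → U` is bijective, `x ⊗ 1 = 1 ⊗ x` in `U ⊗_R U`; hence every
`R`-linear map `U → U` is multiplication by an element of `U`, and `U ⊗_R K = 0`. The first fact
gives `Hom_R(K, U) = 0`. For the second, compute `Ext¹_R(K, -)` with a projective resolution
`P → K`: by flatness `U ⊗ P` is still exact, and it is a resolution of `U ⊗ K = 0`, so every
`1`-cocycle `P₁ → U` extends, through `U ⊗ P₁ → U ⊗ P₀`, to a map `P₀ → U`. Finally the snake
lemma for `Hom(P, -)` applied to `0 → R → U → K → 0` gives the exact sequence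
`Hom(K, U) → Hom(K, K) → Ext¹(K, R) → Ext¹(K, U)` whose outer terms vanish.
-/

open Function TensorProduct

theorem LinearMap.exact_compRight_of_injective {R M A B C : Type*} [CommRing R]
    [AddCommGroup M] [Module R M] [AddCommGroup A] [Module R A] [AddCommGroup B] [Module R B]
    [AddCommGroup C] [Module R C] {f : A →ₗ[R] B} {g : B →ₗ[R] C}
    (hfg : Exact f g) (hf : Injective f) :
    Exact (LinearMap.compRight R (M := M) f) (LinearMap.compRight R g) := by
  intro ψ
  constructor
  · intro hψ
    have hrange : ∀ x, ψ x ∈ LinearMap.range f := fun x =>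
      (hfg (ψ x)).1 (LinearMap.congr_fun hψ x)
    refine ⟨(LinearEquiv.ofInjective f hf).symm ∘ₗ ψ.codRestrict _ hrange, ?_⟩
    ext x
    exact congrArg Subtype.val ((LinearEquiv.ofInjective f hf).apply_symm_apply ⟨ψ x, hrange x⟩)
  · rintro ⟨c, rfl⟩
    rw [LinearMap.compRight_apply, LinearMap.compRight_apply, ← LinearMap.comp_assoc,
      hfg.linearMap_comp_eq_zero, LinearMap.zero_comp]

/- Degree one of the cochain complex `Hom(X•, Y)` of a complex `X₂ → X₁ → X₀`; for a projective
resolution `X•` of `X`, `H1` is `Ext¹(X, Y)`. -/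
namespace HomComplex

variable {R : Type*} [CommRing R]
  {X₂ X₁ X₀ X : Type*} [AddCommGroup X₂] [Module R X₂] [AddCommGroup X₁] [Module R X₁]
  [AddCommGroup X₀] [Module R X₀] [AddCommGroup X] [Module R X]
  {d₂ : X₂ →ₗ[R] X₁} {d₁ : X₁ →ₗ[R] X₀}
  {A B C : Type*} [AddCommGroup A] [Module R A] [AddCommGroup B] [Module R B]
  [AddCommGroup C] [Module R C]

variable (d₂) in
def cocycles (Y : Type*) [AddCommGroup Y] [Module R Y] : Submodule R (X₁ →ₗ[R] Y) :=
  LinearMap.ker (LinearMap.lcomp R Y d₂)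

theorem mem_cocycles {Y : Type*} [AddCommGroup Y] [Module R Y] {χ : X₁ →ₗ[R] Y} :
    χ ∈ cocycles d₂ Y ↔ χ ∘ₗ d₂ = 0 :=
  Iff.rfl

def coboundary (hd : d₁ ∘ₗ d₂ = 0) (Y : Type*) [AddCommGroup Y] [Module R Y] :
    (X₀ →ₗ[R] Y) →ₗ[R] cocycles d₂ Y :=
  (LinearMap.lcomp R Y d₁).codRestrict _ fun ψ => by
    rw [mem_cocycles, LinearMap.lcomp_apply', LinearMap.comp_assoc, hd, LinearMap.comp_zero]

abbrev H1 (hd : d₁ ∘ₗ d₂ = 0) (Y : Type*) [AddCommGroup Y] [Module R Y] : Type _ :=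
  cocycles d₂ Y ⧸ LinearMap.range (coboundary hd Y)

variable (d₂) in
def cocyclesMap (f : A →ₗ[R] B) : cocycles d₂ A →ₗ[R] cocycles d₂ B :=
  (LinearMap.compRight R f).restrict fun χ hχ => by
    rw [mem_cocycles] at hχ ⊢
    rw [LinearMap.compRight_apply, LinearMap.comp_assoc, hχ, LinearMap.comp_zero]

theorem injective_cocyclesMap {f : A →ₗ[R] B} (hf : Injective f) :
    Injective (cocyclesMap d₂ f) := fun _ _ h =>
  Subtype.ext (hf.injective_linearMapComp_left (congrArg Subtype.val h))

@[simp]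
theorem coe_cocyclesMap (f : A →ₗ[R] B) (χ : cocycles d₂ A) :
    (cocyclesMap d₂ f χ : X₁ →ₗ[R] B) = f ∘ₗ χ :=
  rfl

def H1Map (hd : d₁ ∘ₗ d₂ = 0) (f : A →ₗ[R] B) : H1 hd A →ₗ[R] H1 hd B :=
  Submodule.mapQ _ _ (cocyclesMap d₂ f) <| by
    rintro _ ⟨ψ, rfl⟩
    exact ⟨f ∘ₗ ψ, rfl⟩

theorem exact_coboundary_of_exact (hd : d₁ ∘ₗ d₂ = 0) {ε : X₀ →ₗ[R] X}
    (hex : Exact d₁ ε) (hε : Surjective ε) (Y : Type*) [AddCommGroup Y] [Module R Y] :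
    Exact (LinearMap.lcomp R Y ε) (coboundary hd Y) := by
  intro ψ
  rw [← (LinearMap.exact_lcomp_of_exact_of_surjective Y hex hε) ψ]
  exact Subtype.ext_iff

theorem exact_cocyclesMap {f : A →ₗ[R] B} {g : B →ₗ[R] C} (hfg : Exact f g) (hf : Injective f) :
    Exact (cocyclesMap d₂ f) (cocyclesMap d₂ g) := by
  rintro ⟨χ, hχ⟩
  have hrow := LinearMap.exact_compRight_of_injective (M := X₁) hfg hf χ
  rw [Subtype.ext_iff, coe_cocyclesMap, Submodule.coe_zero]
  refine hrow.trans ⟨?_, ?_⟩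
  · rintro ⟨c, rfl⟩
    refine ⟨⟨c, ?_⟩, rfl⟩
    apply hf.injective_linearMapComp_left
    beta_reduce
    rwa [LinearMap.comp_zero]
  · rintro ⟨c, hc⟩
    exact ⟨c, congrArg Subtype.val hc⟩

section Connecting

/- The snake lemma for `coboundary`, from the row `0 → Hom(X₀, A) → Hom(X₀, B) → Hom(X₀, C) → 0`
(exact on the right because `X₀` is projective) to the row of cocycles: the kernels of the
vertical maps are `Hom(X, -)`, their cokernels are `H1`. -/

variable [Module.Projective R X₀] (hd : d₁ ∘ₗ d₂ = 0) {ε : X₀ →ₗ[R] X} (hex : Exact d₁ ε)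
  (hε : Surjective ε) {f : A →ₗ[R] B} {g : B →ₗ[R] C} (hfg : Exact f g) (hf : Injective f)
  (hg : Surjective g)

def connecting : (X →ₗ[R] C) →ₗ[R] H1 hd A :=
  SnakeLemma.δ' (coboundary hd A) (coboundary hd B) (coboundary hd C)
    (LinearMap.compRight R f) (LinearMap.compRight R g)
    (LinearMap.exact_compRight_of_injective hfg hf)
    (cocyclesMap d₂ f) (cocyclesMap d₂ g) (exact_cocyclesMap hfg hf) rfl rfl
    (LinearMap.lcomp R C ε) (exact_coboundary_of_exact hd hex hε C)
    (LinearMap.range (coboundary hd A)).mkQ (LinearMap.exact_map_mkQ_range _)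
    (fun φ => Module.projective_lifting_property g φ hg) (injective_cocyclesMap hf)

theorem exact_compRight_connecting :
    Exact (LinearMap.compRight R g : (X →ₗ[R] B) →ₗ[R] X →ₗ[R] C)
      (connecting hd hex hε hfg hf hg) :=
  SnakeLemma.exact_δ'_right _ _ _ _ _ _ _ _ _ _ _ (LinearMap.lcomp R B ε)
    (exact_coboundary_of_exact hd hex hε B) _ _ _ _ _ _ (LinearMap.compRight R g) rfl
    (LinearMap.lcomp_injective_of_surjective ε hε)

theorem exact_connecting_H1Map :
    Exact (connecting hd hex hε hfg hf hg) (H1Map hd f) :=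
  SnakeLemma.exact_δ'_left _ _ _ _ _ _ _ _ _ _ _ _ _ _ _
    (LinearMap.range (coboundary hd B)).mkQ (LinearMap.exact_map_mkQ_range _) _ _ (H1Map hd f) rfl
    (Submodule.mkQ_surjective _)

theorem bijective_connecting [Subsingleton (X →ₗ[R] B)] [Subsingleton (H1 hd B)] :
    Bijective (connecting hd hex hε hfg hf hg) := by
  refine ⟨(injective_iff_map_eq_zero _).2 fun φ hφ => ?_, fun c => ?_⟩
  · obtain ⟨ψ, rfl⟩ := (exact_compRight_connecting hd hex hε hfg hf hg φ).1 hφ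
    rw [Subsingleton.elim ψ 0, map_zero]
  · exact (exact_connecting_H1Map hd hex hε hfg hf hg c).1 (Subsingleton.elim _ _)

end Connecting

theorem subsingleton_H1_of_flat {U : Type*} [CommRing U] [Algebra R U]
    [Module.Flat R U] (hex₁ : Exact d₂ d₁) {ε : X₀ →ₗ[R] X} (hex : Exact d₁ ε)
    (hε : Surjective ε) [Subsingleton (U ⊗[R] X)] :
    Subsingleton (H1 hex₁.linearMap_comp_eq_zero U) := by
  refine Submodule.Quotient.subsingleton_iff.2 (LinearMap.range_eq_top.2 ?_)
  rintro ⟨f, hf⟩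
  have hsurj : Surjective (LinearMap.lTensor U d₁) := fun z =>
    (lTensor_exact U hex hε z).1 (Subsingleton.elim _ _)
  let F : U ⊗[R] X₁ →ₗ[R] U := TensorProduct.lift ((LinearMap.mul R U).compl₂ f)
  have hF : F ∘ₗ LinearMap.lTensor U d₂ = 0 := by
    ext x a
    simpa [F] using congrArg (x * ·) (LinearMap.congr_fun hf a)
  obtain ⟨G, hG⟩ := (LinearMap.exact_lcomp_of_exact_of_surjective U
    (Module.Flat.lTensor_exact U hex₁) hsurj F).1 hF
  refine ⟨G ∘ₗ TensorProduct.mk R U X₀ 1, Subtype.ext ?_⟩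
  ext b
  simpa [F, coboundary] using LinearMap.congr_fun hG (1 ⊗ₜ b)

end HomComplex

section RingEpi

variable {R U : Type*} [CommRing R] [CommRing U] [Algebra R U]

theorem tmul_one_eq_one_tmul_of_bijective_mul' (hepi : Bijective (LinearMap.mul' R U)) (x : U) :
    x ⊗ₜ[R] (1 : U) = 1 ⊗ₜ x :=
  hepi.injective (by simp)

theorem tmul_eq_mul_tmul_one_of_bijective_mul' (hepi : Bijective (LinearMap.mul' R U))
    (x y : U) : y ⊗ₜ[R] x = (y * x) ⊗ₜ 1 := by
  simpa using congrArg (LinearMap.rTensor U (LinearMap.mulLeft R y))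
    (tmul_one_eq_one_tmul_of_bijective_mul' hepi x).symm

theorem LinearMap.apply_eq_mul_apply_one_of_bijective_mul'
    (hepi : Bijective (LinearMap.mul' R U)) (g : U →ₗ[R] U) (x : U) : g x = x * g 1 := by
  simpa using congrArg (TensorProduct.lift ((LinearMap.mul R U).compl₂ g))
    (tmul_one_eq_one_tmul_of_bijective_mul' hepi x).symm

theorem quotient_mk_one_range_algebraLinearMap :
    (Submodule.Quotient.mk 1 : U ⧸ LinearMap.range (Algebra.linearMap R U)) = 0 :=
  (Submodule.Quotient.mk_eq_zero _).2 ⟨1, map_one (algebraMap R U)⟩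

theorem subsingleton_linearMap_quotient_range_of_bijective_mul'
    (hepi : Bijective (LinearMap.mul' R U)) :
    Subsingleton ((U ⧸ LinearMap.range (Algebra.linearMap R U)) →ₗ[R] U) := by
  refine subsingleton_of_forall_eq 0 fun f => ?_
  apply (Submodule.mkQ_surjective _).injective_linearMapComp_right
  ext x
  simp [LinearMap.apply_eq_mul_apply_one_of_bijective_mul' hepi (f ∘ₗ _) x,
    quotient_mk_one_range_algebraLinearMap]

theorem subsingleton_tensor_quotient_range_of_bijective_mul'
    (hepi : Bijective (LinearMap.mul' R U)) :
    Subsingleton (U ⊗[R] (U ⧸ LinearMap.range (Algebra.linearMap R U))) := by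
  refine subsingleton_of_forall_eq 0 fun z => ?_
  induction z using TensorProduct.induction_on with
  | zero => rfl
  | tmul y k =>
    obtain ⟨x, rfl⟩ := Submodule.mkQ_surjective _ k
    rw [← LinearMap.lTensor_tmul, tmul_eq_mul_tmul_one_of_bijective_mul' hepi,
      LinearMap.lTensor_tmul, Submodule.mkQ_apply, quotient_mk_one_range_algebraLinearMap,
      tmul_zero]
  | add a b ha hb => rw [ha, hb, add_zero]

end RingEpi

namespace CategoryTheory.ProjectiveResolution

variable {R : Type u} [CommRing R] {X : ModuleCat.{u} R} (P : ProjectiveResolution X)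

theorem exact_d_two_one_d_one_zero : Exact (P.complex.d 2 1).hom (P.complex.d 1 0).hom := by
  have h := (HomologicalComplex.exactAt_iff' P.complex 2 1 0 (by simp) (by simp)).1
    (P.complex_exactAt_succ 0)
  rw [LinearMap.exact_iff]
  exact ((P.complex.sc' 2 1 0).moduleCat_exact_iff_range_eq_ker.1 h).symm

def augmentation : P.complex.X 0 →ₗ[R] X :=
  (P.π.f 0).hom

theorem exact_d_one_zero_augmentation : Exact (P.complex.d 1 0).hom P.augmentation := by
  rw [LinearMap.exact_iff]
  exact ((ShortComplex.mk _ _ P.complex_d_comp_π_f_zero).moduleCat_exact_iff_range_eq_ker.1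
    P.exact₀).symm

theorem surjective_augmentation : Surjective P.augmentation :=
  (ModuleCat.epi_iff_surjective _).1 inferInstance

instance (n : ℕ) : Module.Projective R (P.complex.X n) :=
  (IsProjective.iff_projective _).2 (P.projective n)

def ext1LinearEquiv (Y : ModuleCat.{u} R) :
    ext1 R X Y ≃ₗ[R] HomComplex.H1 P.exact_d_two_one_d_one_zero.linearMap_comp_eq_zero Y := by
  let S := (P.complex.linearYonedaObj R Y).sc' 0 1 2
  refine (P.isoExt 1 Y ≪≫ HomologicalComplex.homologyIsoSc' _ 0 1 2 (by simp) (by simp) ≪≫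
    S.moduleCatHomologyIso).toLinearEquiv.trans (Submodule.Quotient.equiv _ _
      (ModuleCat.homLinearEquiv.ofSubmodules _ _ ?_) ?_)
  · ext χ
    constructor
    · rintro ⟨ψ, hψ, rfl⟩
      exact congrArg ModuleCat.Hom.hom hψ
    · intro hχ
      exact ⟨ModuleCat.ofHom χ, ModuleCat.hom_ext hχ, rfl⟩
  · ext χ
    constructor
    · rintro ⟨_, ⟨ψ, rfl⟩, rfl⟩
      exact ⟨ψ.hom, rfl⟩
    · rintro ⟨ψ, rfl⟩
      exact ⟨_, ⟨ModuleCat.ofHom ψ, rfl⟩, rfl⟩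

end CategoryTheory.ProjectiveResolution

/-- let `u : R → U` be an injective flat ring epimorphism of commutative
rings with cokernel `K = U/R`. Then `Hom_R(K, U) = 0` and `Ext¹_R(K, U) = 0`;
consequently the connecting map of `Hom_R(K, -)` applied to `0 → R → U → K → 0` gives an
isomorphism `Hom_R(K, K) ≅ Ext¹_R(K, R)`. -/
theorem stmt8 {R : Type u} [CommRing R] {U : Type u} [CommRing U] [Algebra R U]
    [Module.Flat R U]
    (hinj : Function.Injective (algebraMap R U))
    (hepi : Function.Bijective (LinearMap.mul' R U)) :
    Subsingleton ((U ⧸ LinearMap.range (Algebra.linearMap R U)) →ₗ[R] U) ∧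
    Subsingleton (ext1 R
      (ModuleCat.of R (U ⧸ LinearMap.range (Algebra.linearMap R U)))
      (ModuleCat.of R U)) ∧
    Nonempty
      (((U ⧸ LinearMap.range (Algebra.linearMap R U)) →ₗ[R]
          (U ⧸ LinearMap.range (Algebra.linearMap R U))) ≃ₗ[R]
        ext1 R (ModuleCat.of R (U ⧸ LinearMap.range (Algebra.linearMap R U)))
          (ModuleCat.of R R)) := by
  let P := CategoryTheory.projectiveResolution
    (ModuleCat.of R (U ⧸ LinearMap.range (Algebra.linearMap R U)))
  have := subsingleton_tensor_quotient_range_of_bijective_mul' hepi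
  have hHom := subsingleton_linearMap_quotient_range_of_bijective_mul' hepi
  have := HomComplex.subsingleton_H1_of_flat (U := U) P.exact_d_two_one_d_one_zero
    P.exact_d_one_zero_augmentation P.surjective_augmentation
  have hδ := HomComplex.bijective_connecting P.exact_d_two_one_d_one_zero.linearMap_comp_eq_zero
    P.exact_d_one_zero_augmentation P.surjective_augmentation
    (LinearMap.exact_map_mkQ_range (Algebra.linearMap R U)) hinj (Submodule.mkQ_surjective _)
  exact ⟨hHom, (P.ext1LinearEquiv (ModuleCat.of R U)).subsingleton,
    ⟨(LinearEquiv.ofBijective _ hδ).trans (P.ext1LinearEquiv (ModuleCat.of R R)).symm⟩⟩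

end
end

section
/- Let u: R → U be a ring epimorphism, b: A → B and c: A → C be R-module homomorphisms such that C is a u-contramodule, Ker(b) is u-h-divisible (an epimorphic image of a direct sum of copies of U), and Coker(b) is a U-module. Then there exists a unique R-homomorphism f: B → C such that c = f ∘ b. -/
/-!
An `R`-linear map `f : D → C` out of a `U`-module vanishes, since `t ↦ f (t • x)` lies in
`Hom_R(U, C) = 0`. Hence `c` kills the `u`-h-divisible module `Ker b`, `C` embeds in the pushout
`E` of `b` and `c`, and `0 → C → E → Coker b → 0` is exact. Such an extension of a `U`-module `V`
by `C` splits: each copy of `U` in the free `U`-module `U^(V) → V` lifts to `E` because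
`Ext¹_R(U, C) = 0`, and the resulting map `U^(V) → E` vanishes on the kernel, a `U`-module. A
retraction `E → C` restricted to `B` is the required `f`; it is unique because two such maps
differ by a map `Coker b → C`, which is zero.
-/

universe u

noncomputable section

open CategoryTheory Limits

section Abelian

variable {R : Type*} [Ring R] {𝒞 : Type*} [Category 𝒞] [Abelian 𝒞] [Linear R 𝒞]
  [EnoughProjectives 𝒞]

lemma CategoryTheory.ProjectiveResolution.exists_d_comp_eq_of_subsingleton_ext_one {X Y : 𝒞}
    (P : ProjectiveResolution X) (hExt : Subsingleton (((Ext R 𝒞 1).obj (Opposite.op X)).obj Y))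
    (φ : P.complex.X 1 ⟶ Y) (hφ : P.complex.d 2 1 ≫ φ = 0) :
    ∃ ψ : P.complex.X 0 ⟶ Y, P.complex.d 1 0 ≫ ψ = φ := by
  have hExact : (P.complex.linearYonedaObj R Y).ExactAt 1 :=
    (HomologicalComplex.exactAt_iff_isZero_homology _ _).2
      ((ModuleCat.isZero_of_subsingleton _).of_iso (P.isoExt 1 Y).symm)
  have hExact' := (HomologicalComplex.exactAt_iff' _ 0 1 2 (by simp) (by simp)).1 hExact
  rw [ShortComplex.moduleCat_exact_iff] at hExact'
  exact hExact' φ hφ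

/-- Lift `P₀ → X → S.X₃` to `lam : P₀ → S.X₂`; then `d ≫ lam` is a cocycle with values in
`S.X₁`, hence a coboundary `d ≫ ψ`, and `lam - ψ ≫ S.f` descends to the cokernel `X` of `d`. -/
lemma CategoryTheory.ShortComplex.ShortExact.exists_lift_of_subsingleton_ext_one {X : 𝒞}
    {S : ShortComplex 𝒞} (hS : S.ShortExact)
    (hExt : Subsingleton (((Ext R 𝒞 1).obj (Opposite.op X)).obj S.X₁)) (g : X ⟶ S.X₃) :
    ∃ σ : X ⟶ S.X₂, σ ≫ S.g = g := by
  have := hS.mono_f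
  have := hS.epi_g
  let P : ProjectiveResolution X := (HasProjectiveResolution.out (Z := X)).some
  let π₀ : P.complex.X 0 ⟶ X := P.π.f 0
  have : Epi π₀ := inferInstanceAs (Epi (P.π.f 0))
  have hπ₀ : P.complex.d 1 0 ≫ π₀ = 0 := P.complex_d_comp_π_f_zero
  let lam : P.complex.X 0 ⟶ S.X₂ := Projective.factorThru (π₀ ≫ g) S.g
  have hlam : lam ≫ S.g = π₀ ≫ g := Projective.factorThru_comp _ _
  let φ : P.complex.X 1 ⟶ S.X₁ := hS.exact.lift (P.complex.d 1 0 ≫ lam) (by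
    rw [Category.assoc, hlam, reassoc_of% hπ₀, zero_comp])
  have hφ : φ ≫ S.f = P.complex.d 1 0 ≫ lam := hS.exact.lift_f _ _
  obtain ⟨ψ, hψ⟩ := P.exists_d_comp_eq_of_subsingleton_ext_one hExt φ (by
    rw [← cancel_mono S.f, Category.assoc, hφ, P.complex.d_comp_d_assoc, zero_comp, zero_comp])
  let μ : P.complex.X 0 ⟶ S.X₂ := lam - ψ ≫ S.f
  have hμ : P.complex.d 1 0 ≫ μ = 0 := by
    rw [Preadditive.comp_sub, ← Category.assoc, hψ, hφ, sub_self]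
  obtain ⟨σ, hσ⟩ : ∃ σ : X ⟶ S.X₂, π₀ ≫ σ = μ :=
    ⟨_, (Cofork.IsColimit.desc' P.isColimitCokernelCofork μ (by simpa using hμ)).2⟩
  refine ⟨σ, ?_⟩
  rw [← cancel_epi π₀, reassoc_of% hσ, Preadditive.sub_comp, hlam, Category.assoc, S.zero,
    comp_zero, sub_zero]

end Abelian

lemma LinearMap.exists_comp_eq_of_surjective_of_ker_le {R M N P : Type*} [Ring R]
    [AddCommGroup M] [AddCommGroup N] [AddCommGroup P] [Module R M] [Module R N] [Module R P]
    {π : M →ₗ[R] N} (hπ : Function.Surjective π) {f : M →ₗ[R] P} (h : ker π ≤ ker f) :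
    ∃ g : N →ₗ[R] P, g ∘ₗ π = f :=
  ⟨(ker π).liftQ f h ∘ₗ (π.quotKerEquivOfSurjective hπ).symm.toLinearMap, by ext; simp⟩

section HomFromUModule

variable {R : Type*} [CommSemiring R] {U : Type*} [Semiring U] [Algebra R U]
  {C D : Type*} [AddCommMonoid C] [Module R C] [AddCommMonoid D] [Module R D]
  [Module U D] [IsScalarTower R U D]

lemma LinearMap.eq_zero_of_subsingleton_hom (f : D →ₗ[R] C) (hU : Subsingleton (U →ₗ[R] C)) :
    f = 0 := by
  ext x
  simpa using LinearMap.congr_fun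
    (Subsingleton.elim (f ∘ₗ (LinearMap.toSpanSingleton U D x).restrictScalars R) 0) 1

lemma LinearMap.eq_zero_of_surjective_of_subsingleton_hom {N : Type*} [AddCommMonoid N]
    [Module R N] (f : N →ₗ[R] C) (hU : Subsingleton (U →ₗ[R] C)) {g : D →ₗ[R] N}
    (hg : Function.Surjective g) : f = 0 :=
  (LinearMap.cancel_right hg).1 <| by rw [(f ∘ₗ g).eq_zero_of_subsingleton_hom hU, zero_comp]

lemma LinearMap.eq_zero_of_range_le_range {E : Type*} [AddCommMonoid E] [Module R E]
    (f : D →ₗ[R] E) (hU : Subsingleton (U →ₗ[R] C)) {j : C →ₗ[R] E} (hj : Function.Injective j)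
    (hf : range f ≤ range j) : f = 0 := by
  have h := ((LinearEquiv.ofInjective j hj).symm.toLinearMap ∘ₗ
    f.codRestrict _ fun x ↦ hf ⟨x, rfl⟩).eq_zero_of_subsingleton_hom hU
  ext x
  simpa using congr_arg j (LinearMap.congr_fun h x)

end HomFromUModule

section Extensions

variable {R : Type u} [CommRing R] {C E V : Type u} [AddCommGroup C] [Module R C]
  [AddCommGroup E] [Module R E] [AddCommGroup V] [Module R V]
  {j : C →ₗ[R] E} {p : E →ₗ[R] V}

lemma Function.Exact.exists_comp_eq_of_subsingleton_ext1 {W : Type u} [AddCommGroup W]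
    [Module R W] (hExt : Subsingleton (ext1 R (ModuleCat.of R W) (ModuleCat.of R C)))
    (hjp : Function.Exact j p) (hj : Function.Injective j) (hp : Function.Surjective p)
    (g : W →ₗ[R] V) : ∃ σ : W →ₗ[R] E, p ∘ₗ σ = g := by
  let S := ModuleCat.shortComplexOfCompEqZero j p hjp.linearMap_comp_eq_zero
  obtain ⟨σ, hσ⟩ := (ModuleCat.shortComplex_shortExact S hjp hj hp)
    |>.exists_lift_of_subsingleton_ext_one hExt (ModuleCat.ofHom g)
  exact ⟨σ.hom, congr_arg ModuleCat.Hom.hom hσ⟩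

variable {U : Type u} [Ring U] [Algebra R U] [Module U V] [IsScalarTower R U V]

lemma Function.Exact.exists_comp_eq_id_of_isScalarTower (hU : Subsingleton (U →ₗ[R] C))
    (hExt : Subsingleton (ext1 R (ModuleCat.of R U) (ModuleCat.of R C)))
    (hjp : Function.Exact j p) (hj : Function.Injective j) (hp : Function.Surjective p) :
    ∃ σ : V →ₗ[R] E, p ∘ₗ σ = LinearMap.id := by
  let π : (V →₀ U) →ₗ[U] V := Finsupp.linearCombination U id
  have hπ : Function.Surjective π := fun v ↦ ⟨Finsupp.single v 1, by simp [π]⟩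
  choose lift hlift using fun v ↦ hjp.exists_comp_eq_of_subsingleton_ext1 hExt hj hp
    ((LinearMap.toSpanSingleton U V v).restrictScalars R)
  let lam : (V →₀ U) →ₗ[R] E := Finsupp.lsum R lift
  have hlam : p ∘ₗ lam = π.restrictScalars R := by
    refine Finsupp.lhom_ext' fun v ↦ LinearMap.ext fun t ↦ ?_
    simpa [lam, π] using LinearMap.congr_fun (hlift v) t
  have hker : LinearMap.ker (π.restrictScalars R) ≤ LinearMap.ker lam := by
    let lamK := lam ∘ₗ (LinearMap.ker π).subtype.restrictScalars R
    have hrange : LinearMap.range lamK ≤ LinearMap.range j := by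
      rintro _ ⟨⟨k, hk⟩, rfl⟩
      exact (hjp _).1 ((LinearMap.congr_fun hlam k).trans hk)
    have hzero : lamK = 0 :=
      LinearMap.eq_zero_of_range_le_range (D := LinearMap.ker π) lamK hU hj hrange
    exact fun k hk ↦ LinearMap.congr_fun hzero ⟨k, hk⟩
  obtain ⟨σ, hσ⟩ :=
    LinearMap.exists_comp_eq_of_surjective_of_ker_le (π := π.restrictScalars R) hπ hker
  refine ⟨σ, (LinearMap.cancel_right (g := π.restrictScalars R) hπ).1 ?_⟩
  rw [LinearMap.comp_assoc, hσ, hlam]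
  rfl

end Extensions

namespace LinearMap

variable {R : Type*} [CommRing R] {A B C : Type*} [AddCommGroup A] [AddCommGroup B]
  [AddCommGroup C] [Module R A] [Module R B] [Module R C] (b : A →ₗ[R] B) (c : A →ₗ[R] C)

abbrev pushout : Type _ := (B × C) ⧸ range (b.prod (-c))

def pushoutInl : B →ₗ[R] b.pushout c := (range (b.prod (-c))).mkQ ∘ₗ inl R B C

def pushoutInr : C →ₗ[R] b.pushout c := (range (b.prod (-c))).mkQ ∘ₗ inr R B C

def pushoutToCokernel : b.pushout c →ₗ[R] B ⧸ range b :=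
  (range (b.prod (-c))).liftQ ((range b).mkQ ∘ₗ fst R B C) <| by
    rintro _ ⟨a, rfl⟩
    simp

lemma pushoutInl_comp : b.pushoutInl c ∘ₗ b = b.pushoutInr c ∘ₗ c := by
  ext a
  simp only [pushoutInl, pushoutInr, coe_comp, Function.comp_apply, Submodule.mkQ_apply,
    inl_apply, inr_apply, Submodule.Quotient.eq]
  exact ⟨a, by simp⟩

lemma pushoutInr_injective (h : ker b ≤ ker c) : Function.Injective (b.pushoutInr c) := by
  intro z z' hz
  obtain ⟨a, ha⟩ := (Submodule.Quotient.eq _).1 hz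
  have hb : b a = 0 := by simpa using congr_arg Prod.fst ha
  have hc : -c a = z - z' := by simpa using congr_arg Prod.snd ha
  rwa [h hb, neg_zero, eq_comm, sub_eq_zero] at hc

lemma pushoutToCokernel_surjective : Function.Surjective (b.pushoutToCokernel c) := by
  intro q
  obtain ⟨x, rfl⟩ := Submodule.mkQ_surjective _ q
  exact ⟨b.pushoutInl c x, rfl⟩

lemma exact_pushoutInr_pushoutToCokernel :
    Function.Exact (b.pushoutInr c) (b.pushoutToCokernel c) := by
  intro y
  obtain ⟨⟨x, z⟩, rfl⟩ := Submodule.mkQ_surjective _ y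
  change (range b).mkQ x = 0 ↔ ∃ z', (range (b.prod (-c))).mkQ (0, z') = _
  simp only [Submodule.mkQ_apply, Submodule.Quotient.mk_eq_zero, Submodule.Quotient.eq]
  constructor
  · rintro ⟨a, rfl⟩
    exact ⟨z + c a, -a, by simp⟩
  · rintro ⟨z', a, ha⟩
    exact ⟨-a, by simp [show b a = -x by simpa using congr_arg Prod.fst ha]⟩

end LinearMap

lemma LinearMap.ext_of_comp_eq_of_isScalarTower {R U A B C : Type*} [CommRing R] [Semiring U]
    [Algebra R U] [AddCommGroup A] [AddCommGroup B] [AddCommGroup C] [Module R A] [Module R B]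
    [Module R C] (hU : Subsingleton (U →ₗ[R] C)) {b : A →ₗ[R] B}
    [Module U (B ⧸ LinearMap.range b)] [IsScalarTower R U (B ⧸ LinearMap.range b)]
    {f g : B →ₗ[R] C} (h : f ∘ₗ b = g ∘ₗ b) : f = g := by
  have hfg : LinearMap.range b ≤ LinearMap.ker (f - g) := by
    rintro _ ⟨a, rfl⟩
    simpa [sub_eq_zero] using LinearMap.congr_fun h a
  rw [← sub_eq_zero, ← (LinearMap.range b).liftQ_mkQ _ hfg,
    ((LinearMap.range b).liftQ _ hfg).eq_zero_of_subsingleton_hom hU, zero_comp]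

theorem stmt11_general {R : Type u} [CommRing R] {U : Type u} [CommRing U] [Algebra R U]
    {A B C : Type u} [AddCommGroup A] [AddCommGroup B] [AddCommGroup C]
    [Module R A] [Module R B] [Module R C]
    (b : A →ₗ[R] B) (c : A →ₗ[R] C)
    (hC : Subsingleton (U →ₗ[R] C) ∧
      Subsingleton (ext1 R (ModuleCat.of R U) (ModuleCat.of R C)))
    (hker : ∃ (ι : Type u) (g : (ι →₀ U) →ₗ[R] LinearMap.ker b), Function.Surjective g)
    [Module U (B ⧸ LinearMap.range b)] [IsScalarTower R U (B ⧸ LinearMap.range b)] :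
    ∃! f : B →ₗ[R] C, c = f ∘ₗ b := by
  obtain ⟨hU, hExt⟩ := hC
  obtain ⟨ι, g, hg⟩ := hker
  have hbc : LinearMap.ker b ≤ LinearMap.ker c := fun a ha ↦ LinearMap.congr_fun
    ((c ∘ₗ (LinearMap.ker b).subtype).eq_zero_of_surjective_of_subsingleton_hom hU hg) ⟨a, ha⟩
  have hexact := b.exact_pushoutInr_pushoutToCokernel c
  have hinj := b.pushoutInr_injective c hbc
  have hsurj := b.pushoutToCokernel_surjective c
  obtain ⟨ρ, hρ⟩ : ∃ ρ : b.pushout c →ₗ[R] C, ρ ∘ₗ b.pushoutInr c = LinearMap.id :=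
    ((hexact.split_tfae hinj hsurj).out 0 1).1 <|
      hexact.exists_comp_eq_id_of_isScalarTower hU hExt hinj hsurj
  have hc : c = (ρ ∘ₗ b.pushoutInl c) ∘ₗ b := by
    rw [LinearMap.comp_assoc, b.pushoutInl_comp c, ← LinearMap.comp_assoc, hρ,
      LinearMap.id_comp]
  exact ⟨_, hc, fun f hf ↦ LinearMap.ext_of_comp_eq_of_isScalarTower hU (hf.symm.trans hc)⟩

/-- let `u : R → U` be a ring epimorphism, `b : A → B` and `c : A → C`
`R`-module maps such that `C` is a `u`-contramodule, `Ker b` is `u`-h-divisible (an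
epimorphic image of a direct sum of copies of `U`) and `Coker b` is a `U`-module. Then
there is a unique `R`-homomorphism `f : B → C` with `c = f ∘ b`. -/
theorem stmt11 {R : Type u} [CommRing R] {U : Type u} [CommRing U] [Algebra R U]
    (hepi : Function.Bijective (LinearMap.mul' R U))
    {A B C : Type u} [AddCommGroup A] [AddCommGroup B] [AddCommGroup C]
    [Module R A] [Module R B] [Module R C]
    (b : A →ₗ[R] B) (c : A →ₗ[R] C)
    (hC : Subsingleton (U →ₗ[R] C) ∧
      Subsingleton (ext1 R (ModuleCat.of R U) (ModuleCat.of R C)))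
    (hker : ∃ (ι : Type u) (g : (ι →₀ U) →ₗ[R] LinearMap.ker b), Function.Surjective g)
    [Module U (B ⧸ LinearMap.range b)] [IsScalarTower R U (B ⧸ LinearMap.range b)] :
    ∃! f : B →ₗ[R] C, c = f ∘ₗ b :=
  stmt11_general b c hC hker

end
end

section
/- Let u: R → U be a flat injective ring epimorphism of commutative rings with associated Gabriel topology G = {J : JU = U}. Then for every J ∈ G, every R/J-module M is a u-contramodule: Hom_R(U, M) = 0 = Ext^1_R(U, M). -/
/-!
Write `1 = ∑ jᵢ vᵢ` in `U` with `jᵢ ∈ J`. A linear map `f : U → M` vanishes since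
`f (j v) = j f v = 0`. For `Ext¹` it suffices that every map `g : ker ε → M` extends along every
surjection `ε : P → U`. Dividing `P` by `ker g` gives a surjection `π : E → U` whose kernel
embeds in `M`, hence is killed by `J`. For a set-theoretic section `s` of `π` and `j ∈ J` the map
`u ↦ j • s u` is then linear, so `u ↦ ∑ jᵢ • s (vᵢ u)` is a linear section of `π`, and the
retraction `1 - σ π` of `E` onto `ker π` carries the extension of `g`.
-/

universe u

noncomputable section

open CategoryTheory LinearMap

namespace LinearMap

variable {R : Type*}

theorem exists_comp_eq_of_surjective_of_ker_le_s12 [Ring R] {M N P : Type*}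
    [AddCommGroup M] [Module R M] [AddCommGroup N] [Module R N] [AddCommGroup P] [Module R P]
    (f : M →ₗ[R] N) (hf : Function.Surjective f) (g : M →ₗ[R] P) (hfg : ker f ≤ ker g) :
    ∃ h : N →ₗ[R] P, h ∘ₗ f = g :=
  ⟨(ker f).liftQ g hfg ∘ₗ (f.quotKerEquivOfSurjective hf).symm.toLinearMap, by
    ext x
    simp⟩

theorem exists_comp_eq_of_exact [Ring R] {P₂ P₁ P₀ X Y : Type*}
    [AddCommGroup P₂] [Module R P₂] [AddCommGroup P₁] [Module R P₁]
    [AddCommGroup P₀] [Module R P₀] [AddCommGroup X] [Module R X] [AddCommGroup Y] [Module R Y]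
    {d₂ : P₂ →ₗ[R] P₁} {d₁ : P₁ →ₗ[R] P₀} {ε : P₀ →ₗ[R] X}
    (h₂ : range d₂ = ker d₁) (h₁ : range d₁ = ker ε)
    (hY : ∀ g : ker ε →ₗ[R] Y, ∃ h : P₀ →ₗ[R] Y, h ∘ₗ (ker ε).subtype = g)
    (f : P₁ →ₗ[R] Y) (hf : f ∘ₗ d₂ = 0) :
    ∃ h : P₀ →ₗ[R] Y, h ∘ₗ d₁ = f := by
  let d₁' := d₁.codRestrict (ker ε) fun p => h₁ ▸ mem_range_self d₁ p
  have hd₁' : Function.Surjective d₁' := by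
    rw [← range_eq_top, range_codRestrict, h₁, Submodule.comap_subtype_self]
  have hker : ker d₁' ≤ ker f := by
    rw [ker_codRestrict, ← h₂, range_le_ker_iff]
    exact hf
  obtain ⟨g, hg⟩ := d₁'.exists_comp_eq_of_surjective_of_ker_le_s12 hd₁' f hker
  obtain ⟨h, hh⟩ := hY g
  exact ⟨h, by rw [← hg, ← hh, comp_assoc, subtype_comp_codRestrict]⟩

theorem eq_zero_of_smul_top_eq_top [Ring R] {U M : Type*}
    [AddCommGroup U] [Module R U] [AddCommGroup M] [Module R M]
    {J : Ideal R} (hJ : J • (⊤ : Submodule R U) = ⊤)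
    (hJM : ∀ r ∈ J, ∀ m : M, r • m = 0) (f : U →ₗ[R] M) : f = 0 := by
  refine ker_eq_top.mp (top_le_iff.mp ?_)
  rw [← hJ]
  exact Submodule.smul_le.mpr fun r hr u _ => by simp [hJM r hr]

theorem exists_comp_eq_smul_id_of_surjective [CommRing R] {E U : Type*}
    [AddCommGroup E] [Module R E] [AddCommGroup U] [Module R U]
    (π : E →ₗ[R] U) (hπ : Function.Surjective π) {j : R} (hj : ∀ x ∈ ker π, j • x = 0) :
    ∃ τ : U →ₗ[R] E, π ∘ₗ τ = j • LinearMap.id := by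
  have hj' : ∀ x y, π x = π y → j • x = j • y := fun x y hxy => by
    rw [← sub_eq_zero, ← smul_sub]
    exact hj _ (by simp [hxy])
  have he : ∀ u, π (Function.surjInv hπ u) = u := Function.surjInv_eq hπ
  refine ⟨{ toFun := fun u => j • Function.surjInv hπ u
            map_add' := fun u v => ?_
            map_smul' := fun r u => ?_ }, ?_⟩
  · rw [← smul_add]
    exact hj' _ _ (by simp [he])
  · rw [RingHom.id_apply, smul_comm r]
    exact hj' _ _ (by simp [he])
  · ext u
    simp [he]

theorem exists_comp_eq_id_of_smul_ker_eq_zero [CommRing R] {U E : Type*}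
    [Ring U] [Algebra R U] [AddCommGroup E] [Module R E]
    {J : Ideal R} (hJ : J • (⊤ : Submodule R U) = ⊤)
    (π : E →ₗ[R] U) (hπ : Function.Surjective π) (hker : ∀ j ∈ J, ∀ x ∈ ker π, j • x = 0) :
    ∃ σ : U →ₗ[R] E, π ∘ₗ σ = LinearMap.id := by
  have key : ∀ x ∈ J • (⊤ : Submodule R U), ∃ σ : U →ₗ[R] E, π ∘ₗ σ = mulLeft R x := by
    intro x hx
    refine Submodule.smul_induction_on hx (fun j hj v _ => ?_) fun x y ⟨σ, hσ⟩ ⟨τ, hτ⟩ => ?_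
    · obtain ⟨τ, hτ⟩ := π.exists_comp_eq_smul_id_of_surjective hπ (hker j hj)
      refine ⟨τ ∘ₗ mulLeft R v, ?_⟩
      rw [← comp_assoc, hτ]
      ext u
      simp
    · exact ⟨σ + τ, by rw [comp_add, hσ, hτ]; ext; simp [add_mul]⟩
  obtain ⟨σ, hσ⟩ := key 1 (by rw [hJ]; exact Submodule.mem_top)
  exact ⟨σ, hσ.trans (mulLeft_one R U)⟩

theorem exists_comp_subtype_eq_of_smul_eq_zero [CommRing R] {U P M : Type*}
    [Ring U] [Algebra R U] [AddCommGroup P] [Module R P] [AddCommGroup M] [Module R M]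
    {J : Ideal R} (hJ : J • (⊤ : Submodule R U) = ⊤) (hJM : ∀ r ∈ J, ∀ m : M, r • m = 0)
    (ε : P →ₗ[R] U) (hε : Function.Surjective ε) (g : ker ε →ₗ[R] M) :
    ∃ h : P →ₗ[R] M, h ∘ₗ (ker ε).subtype = g := by
  set N := (ker g).map (ker ε).subtype
  set ε' := N.liftQ ε (Submodule.map_subtype_le _ _)
  have hε' : Function.Surjective ε' := fun u =>
    let ⟨p, hp⟩ := hε u
    ⟨N.mkQ p, hp⟩
  have hker' : ∀ j ∈ J, ∀ x ∈ ker ε', j • x = 0 := by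
    intro j hj x hx
    rw [Submodule.ker_liftQ] at hx
    obtain ⟨p, hp, rfl⟩ := hx
    rw [← map_smul, Submodule.mkQ_apply, Submodule.Quotient.mk_eq_zero]
    exact ⟨j • ⟨p, hp⟩, show g (j • ⟨p, hp⟩) = 0 by rw [map_smul, hJM j hj], rfl⟩
  obtain ⟨σ, hσ⟩ := ε'.exists_comp_eq_id_of_smul_ker_eq_zero hJ hε' hker'
  let ρ : P →ₗ[R] ker ε' := (N.mkQ - σ ∘ₗ ε).codRestrict (ker ε') fun p => by
    simp [← comp_apply ε' σ, hσ, ε']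
  let q : ker ε →ₗ[R] ker ε' := N.mkQ.restrict fun p hp => by simpa [ε'] using hp
  have hq : Function.Surjective q := by
    rintro ⟨_, hx⟩
    rw [Submodule.ker_liftQ] at hx
    obtain ⟨p, hp, rfl⟩ := hx
    exact ⟨⟨p, hp⟩, rfl⟩
  have hqg : ker q ≤ ker g := by
    intro k hk
    obtain ⟨k', hk', hkk'⟩ : (k : P) ∈ N := by
      simpa [q, Subtype.ext_iff] using hk
    rwa [← Subtype.ext hkk']
  obtain ⟨g', hg'⟩ := q.exists_comp_eq_of_surjective_of_ker_le_s12 hq g hqg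
  refine ⟨g' ∘ₗ ρ, ?_⟩
  have hρ : ρ ∘ₗ (ker ε).subtype = q := by
    ext k
    show N.mkQ k - σ (ε k) = N.mkQ k
    rw [mem_ker.mp k.2, map_zero, sub_zero]
  rw [comp_assoc, hρ, hg']

end LinearMap

theorem subsingleton_ext1_of_forall_exists_comp_subtype_eq {R : Type u} [CommRing R]
    {X Y : ModuleCat.{u} R}
    (hY : ∀ (P : Type u) [AddCommGroup P] [Module R P] (ε : P →ₗ[R] X),
      Function.Surjective ε →
        ∀ g : ker ε →ₗ[R] Y, ∃ h : P →ₗ[R] Y, h ∘ₗ (ker ε).subtype = g) :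
    Subsingleton (ext1 R X Y) := by
  let P := ProjectiveResolution.of X
  suffices (P.complex.linearYonedaObj R Y).ExactAt 1 from
    (P.isoExt 1 Y).toLinearEquiv.toEquiv.subsingleton_congr.mpr <|
      ModuleCat.subsingleton_of_isZero this.isZero_homology
  rw [HomologicalComplex.exactAt_iff' _ 0 1 2 (by simp) (by simp),
    ShortComplex.moduleCat_exact_iff]
  intro (f : P.complex.X 1 ⟶ Y) (hf : P.complex.d 2 1 ≫ f = 0)
  have hε := (ModuleCat.epi_iff_surjective (P.π.f 0)).mp inferInstance
  obtain ⟨h, hh⟩ := exists_comp_eq_of_exact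
    ((ShortComplex.moduleCat_exact_iff_range_eq_ker _).mp (P.exact_succ 0))
    ((ShortComplex.moduleCat_exact_iff_range_eq_ker _).mp P.exact₀)
    (hY _ _ hε) f.hom (congrArg ModuleCat.Hom.hom hf)
  exact ⟨ModuleCat.ofHom h, ModuleCat.hom_ext hh⟩

theorem stmt12_general {R : Type u} [CommRing R] {U : Type u} [CommRing U] [Algebra R U]
    (J : Ideal R) (hJ : J • (⊤ : Submodule R U) = ⊤)
    (M : Type u) [AddCommGroup M] [Module R M]
    (hJM : ∀ r ∈ J, ∀ m : M, r • m = 0) :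
    Subsingleton (U →ₗ[R] M) ∧
      Subsingleton (ext1 R (ModuleCat.of R U) (ModuleCat.of R M)) :=
  ⟨subsingleton_of_forall_eq 0 (eq_zero_of_smul_top_eq_top hJ hJM),
    subsingleton_ext1_of_forall_exists_comp_subtype_eq fun _ _ _ ε hε =>
      exists_comp_subtype_eq_of_smul_eq_zero hJ hJM ε hε⟩

/-- let `u : R → U` be a flat injective ring epimorphism of commutative
rings with associated Gabriel topology `𝒢 = {J : JU = U}`. For every `J ∈ 𝒢`, every
`R`-module `M` annihilated by `J` (i.e. every `R/J`-module) is a `u`-contramodule: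
`Hom_R(U, M) = 0 = Ext¹_R(U, M)`. -/
theorem stmt12 {R : Type u} [CommRing R] {U : Type u} [CommRing U] [Algebra R U]
    [Module.Flat R U]
    (hinj : Function.Injective (algebraMap R U))
    (hepi : Function.Bijective (LinearMap.mul' R U))
    (J : Ideal R) (hJ : J • (⊤ : Submodule R U) = ⊤)
    (M : Type u) [AddCommGroup M] [Module R M]
    (hJM : ∀ r ∈ J, ∀ m : M, r • m = 0) :
    Subsingleton (U →ₗ[R] M) ∧
      Subsingleton (ext1 R (ModuleCat.of R U) (ModuleCat.of R M)) :=
  stmt12_general J hJ M hJM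

end
end
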